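/- Let (X_n)_{n≥0} and (Y_n)_{n≥0} be sequences of positive real numbers satisfying, for all n ≥ 0, the recursive inequalities X_{n+1} ≤ c b^n (X_n^{1+α} + X_n^α Y_n^{1+κ}) and Y_{n+1} ≤ c b^n (X_n + Y_n^{1+κ}), where c, b > 1 and α, κ > 0 are given constants. Set σ = min{κ, α}. If X_0 + Y_0^{1+κ} ≤ (2c)^{-(1+κ)/σ} · b^{-(1+κ)/σ²}, then X_n → 0 and Y_n → 0 as n → ∞. -/

import Mathlib

/-!
Put `Z n = X n + Y n ^ (1 + κ)`. As long as `Z n ≤ 1`, both recursions combine into the single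
De Giorgi-type inequality `Z (n+1) ≤ C * B ^ n * Z n ^ (1 + σ)` with `C = (2c)^(1+κ)` and
`B = b^(1+κ)`, because `X n ^ α ≤ Z n ^ σ` and `Z n ^ (1+κ) ≤ Z n ^ (1+σ)` for `Z n ≤ 1`.
The initial smallness condition is then exactly `Z 0 ≤ C ^ (-1/σ) * B ^ (-1/σ²)`, and by induction
`Z n ≤ Z 0 * r ^ n` with `r = B ^ (-1/σ) < 1`: in the inductive step `(r ^ σ) ^ n = B ^ (-n)`
cancels the growth `B ^ n`, while `C * Z 0 ^ σ ≤ r` supplies the extra factor `r`.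
-/

open Filter Topology

lemma deGiorgi_le_geometric {Z : ℕ → ℝ} {C B σ : ℝ} (hZ : ∀ n, 0 ≤ Z n) (hC : 1 ≤ C) (hB : 1 ≤ B)
    (hσ : 0 < σ) (hstep : ∀ n, Z n ≤ 1 → Z (n + 1) ≤ C * B ^ n * Z n ^ (1 + σ))
    (h0 : Z 0 ≤ C ^ (-1 / σ) * B ^ (-1 / σ ^ 2)) (n : ℕ) :
    Z n ≤ Z 0 * (B ^ (-1 / σ)) ^ n := by
  set r := B ^ (-1 / σ)
  have hB0 : 0 < B := by linarith
  have hr0 : 0 < r := by positivity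
  have hr1 : r ≤ 1 := Real.rpow_le_one_of_one_le_of_nonpos hB (by rw [neg_div]; simp [hσ.le])
  have hrσ : r ^ σ = B⁻¹ := by
    rw [← Real.rpow_mul hB0.le, div_mul_cancel₀ _ hσ.ne', Real.rpow_neg_one]
  have hCZ : C * Z 0 ^ σ ≤ r := by
    have : (C ^ (-1 / σ) * B ^ (-1 / σ ^ 2)) ^ σ = C⁻¹ * r := by
      rw [Real.mul_rpow (by positivity) (by positivity), ← Real.rpow_mul (by linarith),
        ← Real.rpow_mul hB0.le, div_mul_cancel₀ _ hσ.ne', Real.rpow_neg_one]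
      congr 2; field_simp
    calc C * Z 0 ^ σ ≤ C * (C⁻¹ * r) := by
          gcongr; rw [← this]; exact Real.rpow_le_rpow (hZ 0) h0 hσ.le
      _ = r := by field_simp
  have hZ01 : Z 0 ≤ 1 := h0.trans <| mul_le_one₀
    (Real.rpow_le_one_of_one_le_of_nonpos hC (by rw [neg_div]; simp [hσ.le])) (by positivity)
    (Real.rpow_le_one_of_one_le_of_nonpos hB (by rw [neg_div]; simp [sq_nonneg]))
  induction n with
  | zero => simp
  | succ n ih =>
    have hZn1 : Z n ≤ 1 := ih.trans <| mul_le_one₀ hZ01 (by positivity) (pow_le_one₀ hr0.le hr1)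
    calc Z (n + 1) ≤ C * B ^ n * Z n ^ (1 + σ) := hstep n hZn1
      _ ≤ C * B ^ n * (Z 0 * r ^ n) ^ (1 + σ) := by gcongr; exact hZ n
      _ = (C * Z 0 ^ σ) * (B ^ n * (r ^ σ) ^ n) * (Z 0 * r ^ n) := by
          rw [Real.rpow_add' (mul_nonneg (hZ 0) (by positivity)) (by positivity), Real.rpow_one,
            Real.mul_rpow (hZ 0) (by positivity), ← Real.rpow_pow_comm hr0.le]
          ring
      _ ≤ r * 1 * (Z 0 * r ^ n) := by
          rw [hrσ, ← mul_pow, mul_inv_cancel₀ hB0.ne', one_pow]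
          gcongr
          exact mul_nonneg (hZ 0) (by positivity)
      _ = Z 0 * r ^ (n + 1) := by ring

lemma deGiorgi_tendsto_zero {Z : ℕ → ℝ} {C B σ : ℝ} (hZ : ∀ n, 0 ≤ Z n) (hC : 1 ≤ C) (hB : 1 < B)
    (hσ : 0 < σ) (hstep : ∀ n, Z n ≤ 1 → Z (n + 1) ≤ C * B ^ n * Z n ^ (1 + σ))
    (h0 : Z 0 ≤ C ^ (-1 / σ) * B ^ (-1 / σ ^ 2)) : Tendsto Z atTop (𝓝 0) := by
  have hr : B ^ (-1 / σ) < 1 :=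
    Real.rpow_lt_one_of_one_lt_of_neg hB (div_neg_of_neg_of_pos (by norm_num) hσ)
  have hgeom := (tendsto_pow_atTop_nhds_zero_of_lt_one (by positivity) hr).const_mul (Z 0)
  rw [mul_zero] at hgeom
  exact squeeze_zero hZ (deGiorgi_le_geometric hZ hC hB.le hσ hstep h0) hgeom

lemma rpow_add_rpow_mul_le_rpow {x w α σ : ℝ} (hx : 0 < x) (hw : 0 ≤ w) (hxw : x + w ≤ 1)
    (hσ : 0 ≤ σ) (hσα : σ ≤ α) : x ^ (1 + α) + x ^ α * w ≤ (x + w) ^ (1 + σ) :=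
  calc x ^ (1 + α) + x ^ α * w = x ^ α * (x + w) := by rw [Real.rpow_add hx, Real.rpow_one]; ring
    _ ≤ (x + w) ^ σ * (x + w) := by
        gcongr
        exact (Real.rpow_le_rpow hx.le (by linarith) (hσ.trans hσα)).trans
          (Real.rpow_le_rpow_of_exponent_ge (by linarith) hxw hσα)
    _ = (x + w) ^ (1 + σ) := by rw [Real.rpow_add' (by linarith) (by linarith), Real.rpow_one]; ring

lemma coupled_step_le {x y x' y' K α κ σ : ℝ} (hx : 0 < x) (hy : 0 ≤ y) (hy' : 0 ≤ y')
    (hK : 1 ≤ K) (hσ : 0 ≤ σ) (hσα : σ ≤ α) (hσκ : σ ≤ κ) (hZ : x + y ^ (1 + κ) ≤ 1)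
    (hx' : x' ≤ K * (x ^ (1 + α) + x ^ α * y ^ (1 + κ))) (hy'K : y' ≤ K * (x + y ^ (1 + κ))) :
    x' + y' ^ (1 + κ) ≤ (2 * K) ^ (1 + κ) * (x + y ^ (1 + κ)) ^ (1 + σ) := by
  set Z := x + y ^ (1 + κ)
  have hZ0 : 0 < Z := by positivity
  have hKκ : K ≤ K ^ (1 + κ) := Real.self_le_rpow_of_one_le hK (by linarith)
  have hx'Z : x' ≤ K ^ (1 + κ) * Z ^ (1 + σ) :=
    calc x' ≤ K * Z ^ (1 + σ) := hx'.trans <| by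
          gcongr; exact rpow_add_rpow_mul_le_rpow hx (by positivity) hZ hσ hσα
      _ ≤ K ^ (1 + κ) * Z ^ (1 + σ) := by gcongr
  have hy'Z : y' ^ (1 + κ) ≤ K ^ (1 + κ) * Z ^ (1 + σ) :=
    calc y' ^ (1 + κ) ≤ (K * Z) ^ (1 + κ) := by gcongr; linarith
      _ = K ^ (1 + κ) * Z ^ (1 + κ) := Real.mul_rpow (by linarith) hZ0.le
      _ ≤ K ^ (1 + κ) * Z ^ (1 + σ) := mul_le_mul_of_nonneg_left
          (Real.rpow_le_rpow_of_exponent_ge hZ0 hZ (by linarith)) (by positivity)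
  have h2 : 2 ≤ (2 : ℝ) ^ (1 + κ) := Real.self_le_rpow_of_one_le (by norm_num) (by linarith)
  calc x' + y' ^ (1 + κ) ≤ 2 * K ^ (1 + κ) * Z ^ (1 + σ) := by linarith
    _ ≤ 2 ^ (1 + κ) * K ^ (1 + κ) * Z ^ (1 + σ) := by gcongr
    _ = (2 * K) ^ (1 + κ) * Z ^ (1 + σ) := by rw [Real.mul_rpow (by norm_num) (by linarith)]

lemma tendsto_nhds_zero_of_tendsto_rpow {ι : Type*} {l : Filter ι} {f : ι → ℝ} (hf : ∀ i, 0 ≤ f i)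
    {p : ℝ} (hp : 0 < p) (h : Tendsto (fun i ↦ f i ^ p) l (𝓝 0)) : Tendsto f l (𝓝 0) := by
  have := h.rpow_const (p := p⁻¹) (Or.inr (inv_nonneg.2 hp.le))
  simpa [← Real.rpow_mul (hf _), mul_inv_cancel₀ hp.ne', Real.zero_rpow (inv_ne_zero hp.ne')]
    using this

/-- Fast geometric convergence lemma for coupled nonlinear recursive inequalities. -/
theorem fast_geometric_convergence
    (X Y : ℕ → ℝ) (hX : ∀ n, 0 < X n) (hY : ∀ n, 0 < Y n)
    (c b α κ σ : ℝ) (hc : 1 < c) (hb : 1 < b) (hα : 0 < α) (hκ : 0 < κ)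
    (hσ : σ = min κ α)
    (hrecX : ∀ n, X (n + 1) ≤ c * b ^ n * (X n ^ (1 + α) + X n ^ α * Y n ^ (1 + κ)))
    (hrecY : ∀ n, Y (n + 1) ≤ c * b ^ n * (X n + Y n ^ (1 + κ)))
    (h0 : X 0 + Y 0 ^ (1 + κ) ≤ (2 * c) ^ (-(1 + κ) / σ) * b ^ (-(1 + κ) / σ ^ 2)) :
    Tendsto X atTop (nhds 0) ∧ Tendsto Y atTop (nhds 0) := by
  have hσ0 : 0 < σ := hσ ▸ lt_min hκ hα
  set Z : ℕ → ℝ := fun n ↦ X n + Y n ^ (1 + κ)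
  have hZ : ∀ n, 0 ≤ Z n := fun n ↦ by have := hX n; have := hY n; positivity
  have hstep (n : ℕ) (hn : Z n ≤ 1) :
      Z (n + 1) ≤ (2 * c) ^ (1 + κ) * (b ^ (1 + κ)) ^ n * Z n ^ (1 + σ) :=
    calc Z (n + 1) ≤ (2 * (c * b ^ n)) ^ (1 + κ) * Z n ^ (1 + σ) :=
          coupled_step_le (hX n) (hY n).le (hY _).le
            (one_le_mul_of_one_le_of_one_le hc.le (one_le_pow₀ hb.le)) hσ0.le
            (hσ ▸ min_le_right _ _) (hσ ▸ min_le_left _ _) hn (hrecX n) (hrecY n)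
      _ = (2 * c) ^ (1 + κ) * (b ^ (1 + κ)) ^ n * Z n ^ (1 + σ) := by
          rw [← mul_assoc, Real.mul_rpow (by positivity) (by positivity),
            Real.rpow_pow_comm (by positivity)]
  have hZ0 : Z 0 ≤ ((2 * c) ^ (1 + κ)) ^ (-1 / σ) * (b ^ (1 + κ)) ^ (-1 / σ ^ 2) := by
    rw [← Real.rpow_mul (by positivity), ← Real.rpow_mul (by positivity)]
    convert h0 using 3 <;> ring
  have hZlim : Tendsto Z atTop (𝓝 0) :=
    deGiorgi_tendsto_zero hZ (Real.one_le_rpow (by linarith) (by linarith))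
      (Real.one_lt_rpow hb (by linarith)) hσ0 hstep hZ0
  refine ⟨squeeze_zero (fun n ↦ (hX n).le) (fun n ↦ ?_) hZlim,
    tendsto_nhds_zero_of_tendsto_rpow (fun n ↦ (hY n).le) (by linarith : (0 : ℝ) < 1 + κ)
      (squeeze_zero (fun n ↦ by have := hY n; positivity) (fun n ↦ ?_) hZlim)⟩
  · exact le_add_of_nonneg_right (Real.rpow_pos_of_pos (hY n) _).le
  · exact le_add_of_nonneg_left (hX n).le
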